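/- arXiv:1510.03339 — 3 statements merged into one kernel-verified Lean document; each statement's English description precedes it below -/
import Mathlib

section
/- Positivity preservation: let x, s ∈ ℝⁿ with x > 0, s > 0, let μ′ > 0, and suppose h, f ∈ ℝⁿ satisfy hᵢsᵢ + fᵢxᵢ = μ′ − xᵢsᵢ for all i. If ∑ᵢ (hᵢfᵢ/μ′)² < 1, then xᵢ + hᵢ > 0 and sᵢ + fᵢ > 0 for all i. -/
theorem positivity_preservation {n : ℕ} (x s h f : Fin n → ℝ) (μ' : ℝ)
    (hx : ∀ i, 0 < x i) (hs : ∀ i, 0 < s i) (hμ' : 0 < μ')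
    (hstep : ∀ i, h i * s i + f i * x i = μ' - x i * s i)
    (hsum : ∑ i, (h i * f i / μ') ^ 2 < 1) :
    ∀ i, 0 < x i + h i ∧ 0 < s i + f i := by
  intro i
  -- step 1: |h i * f i| < μ'
  have hterm : (h i * f i / μ') ^ 2 < 1 := by
    have hle : (h i * f i / μ') ^ 2 ≤ ∑ j, (h j * f j / μ') ^ 2 :=
      Finset.single_le_sum (f := fun j => (h j * f j / μ') ^ 2)
        (fun j _ => sq_nonneg _) (Finset.mem_univ i)
    linarith
  have habs : |h i * f i| < μ' := by
    have h1 : |h i * f i / μ'| < 1 := abs_lt_of_sq_lt_sq' (by simpa using hterm) zero_le_one |>.2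
    rw [abs_div, abs_of_pos hμ', div_lt_one hμ'] at h1
    exact h1
  have hcd1 : -μ' < h i * f i := (abs_lt.mp habs).1
  have hcd2 : h i * f i < μ' := (abs_lt.mp habs).2
  have hab := mul_pos (hx i) (hs i)
  have hst := hstep i
  -- key: product positive along the segment
  have key : ∀ α : ℝ, 0 ≤ α → α ≤ 1 → 0 < (x i + α * h i) * (s i + α * f i) := by
    intro α hα0 hα1
    rcases eq_or_lt_of_le hα1 with heq | hlt
    · subst heq
      nlinarith
    · nlinarith [mul_nonneg (mul_nonneg hα0 hα0) (le_of_lt (by linarith : (0:ℝ) < μ' + h i * f i)),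
        mul_pos (sub_pos.mpr hlt) hab,
        mul_nonneg (mul_nonneg hα0 (le_of_lt (sub_pos.mpr hlt))) (le_of_lt hμ')]
  -- from positivity of product at each α, conclude each factor positive at α = 1
  have k1 := key 1 zero_le_one le_rfl
  simp only [one_mul] at k1
  constructor
  · by_contra hxc
    push_neg at hxc
    have hne : x i + h i ≠ 0 := by
      intro h0
      rw [h0, zero_mul] at k1
      exact lt_irrefl 0 k1
    have hlt : x i + h i < 0 := lt_of_le_of_ne hxc hne
    have hc : h i < 0 := by linarith [hx i]
    set t := -(x i) / h i with ht
    have ht0 : 0 < t := div_pos_of_neg_of_neg (by linarith [hx i]) hc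
    have hth : t * h i = -(x i) := div_mul_cancel₀ _ (ne_of_lt hc)
    have ht1 : t < 1 := by nlinarith
    have := key t (le_of_lt ht0) (le_of_lt ht1)
    have hz : x i + t * h i = 0 := by rw [hth]; ring
    rw [hz, zero_mul] at this
    exact lt_irrefl 0 this
  · by_contra hsc
    push_neg at hsc
    have hne : s i + f i ≠ 0 := by
      intro h0
      rw [h0, mul_zero] at k1
      exact lt_irrefl 0 k1
    have hlt : s i + f i < 0 := lt_of_le_of_ne hsc hne
    have hc : f i < 0 := by linarith [hs i]
    set t := -(s i) / f i with ht
    have ht0 : 0 < t := div_pos_of_neg_of_neg (by linarith [hs i]) hc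
    have hth : t * f i = -(s i) := div_mul_cancel₀ _ (ne_of_lt hc)
    have ht1 : t < 1 := by nlinarith
    have := key t (le_of_lt ht0) (le_of_lt ht1)
    have hz : s i + t * f i = 0 := by rw [hth]; ring
    rw [hz, mul_zero] at this
    exact lt_irrefl 0 this
end

section
/- Centrality measure contraction: under the Newton step with h, f satisfying hᵢsᵢ + fᵢxᵢ = μ′ − xᵢsᵢ and hᵀf = 0, where μ′ = (1−δ)μ with δ = 1/(8√n), if σ² = ∑ᵢ (xᵢsᵢ/μ − 1)² ≤ 1/4 and x, s > 0, then σ′² = ∑ᵢ ((xᵢ+hᵢ)(sᵢ+fᵢ)/μ′ − 1)² ≤ 1/4. -/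
/-!
Since `hᵢsᵢ + fᵢxᵢ = μ' - xᵢsᵢ`, the new products are `(xᵢ + hᵢ)(sᵢ + fᵢ) = μ' + hᵢfᵢ`, so
`σ'² = ∑ (hᵢfᵢ)² / μ'²`. By AM-GM, `hᵢfᵢ ≤ (μ' - xᵢsᵢ)² / (4xᵢsᵢ)`, and `σ ≤ 1/2` forces
`xᵢsᵢ ≥ μ/2`, so `hᵢfᵢ ≤ (μ/2)(wᵢ + δ)²` with `wᵢ = xᵢsᵢ/μ - 1`. Cauchy–Schwarz gives
`∑ (wᵢ + δ)² ≤ (1/2 + δ√n)² ≤ (5/8)²`. As `∑ hᵢfᵢ = 0`, the negative parts of the `hᵢfᵢ` sum to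
their positive parts, so `∑ |hᵢfᵢ| ≤ 25μ/64 ≤ μ'/2`, and hence `∑ (hᵢfᵢ)² ≤ μ'²/4`.
-/

open Finset

lemma mul_le_sq_add_div_four_mul {x s h f : ℝ} (hx : 0 < x) (hs : 0 < s) :
    h * f ≤ (h * s + f * x) ^ 2 / (4 * (x * s)) := by
  rw [le_div_iff₀ (by positivity)]
  linarith [four_mul_le_sq_add (h * s) (f * x)]

lemma sum_sq_le_of_sum_eq_zero {ι : Type*} (t : Finset ι) {a b : ι → ℝ}
    (hsum : ∑ i ∈ t, a i = 0) (hab : ∀ i ∈ t, a i ≤ b i) (hb : ∀ i ∈ t, 0 ≤ b i) :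
    ∑ i ∈ t, a i ^ 2 ≤ (2 * ∑ i ∈ t, b i) ^ 2 := by
  have habs : ∑ i ∈ t, |a i| = 2 * ∑ i ∈ t, (a i)⁺ := by
    have htwice := sum_congr rfl fun i (_ : i ∈ t) ↦ abs_add_eq_two_nsmul_posPart (a i)
    rw [sum_add_distrib, hsum, add_zero] at htwice
    simp only [htwice, nsmul_eq_mul, Nat.cast_ofNat, mul_sum]
  calc ∑ i ∈ t, a i ^ 2 = ∑ i ∈ t, |a i| ^ 2 := by simp only [sq_abs]
    _ ≤ (∑ i ∈ t, |a i|) ^ 2 := sum_sq_le_sq_sum_of_nonneg fun i _ ↦ abs_nonneg _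
    _ ≤ (2 * ∑ i ∈ t, b i) ^ 2 := by
      rw [habs]
      gcongr with i hi
      exact max_le (hab i hi) (hb i hi)

lemma sum_add_const_sq_le {ι : Type*} (t : Finset ι) {w : ι → ℝ} {r c : ℝ}
    (hr : 0 ≤ r) (hc : 0 ≤ c) (hw : ∑ i ∈ t, w i ^ 2 ≤ r ^ 2) :
    ∑ i ∈ t, (w i + c) ^ 2 ≤ (r + c * √(#t)) ^ 2 := by
  have hcs : ∑ i ∈ t, w i ≤ r * √(#t) := by
    refine le_trans (le_abs_self _) (abs_le_of_sq_le_sq ?_ (by positivity))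
    calc (∑ i ∈ t, w i) ^ 2 ≤ #t * ∑ i ∈ t, w i ^ 2 := sq_sum_le_card_mul_sum_sq
      _ ≤ #t * r ^ 2 := by gcongr
      _ = (r * √(#t)) ^ 2 := by rw [mul_pow, Real.sq_sqrt (Nat.cast_nonneg _), mul_comm]
  have hexp : ∑ i ∈ t, (w i + c) ^ 2
      = ∑ i ∈ t, w i ^ 2 + 2 * c * ∑ i ∈ t, w i + #t * c ^ 2 := by
    simp only [add_sq, sum_add_distrib, sum_const, nsmul_eq_mul, ← sum_mul, ← mul_sum]
    ring
  have hsq : √(#t : ℝ) ^ 2 = #t := Real.sq_sqrt (Nat.cast_nonneg _)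
  rw [hexp]
  nlinarith [mul_le_mul_of_nonneg_left hcs (by positivity : 0 ≤ 2 * c)]

lemma one_div_eight_sqrt_le (n : ℕ) : 1 / (8 * √n) ≤ 1 / 8 := by
  rcases Nat.eq_zero_or_pos n with rfl | hn
  · simp
  · gcongr
    linarith [Real.one_le_sqrt.mpr (Nat.one_le_cast.mpr hn)]

lemma one_div_eight_sqrt_mul_sqrt_le (n : ℕ) : 1 / (8 * √n) * √n ≤ 1 / 8 := by
  rcases (Real.sqrt_nonneg n).eq_or_lt with h0 | hpos
  · simp [← h0]
  · exact (by field_simp : 1 / (8 * √n) * √n = 1 / 8).le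

lemma step_product_le {x s h f μ μ' : ℝ} (hx : 0 < x) (hs : 0 < s) (hμ : 0 < μ)
    (hxs : μ / 2 ≤ x * s) (hstep : h * s + f * x = μ' - x * s) :
    h * f ≤ (μ' - x * s) ^ 2 / (2 * μ) :=
  calc h * f ≤ (h * s + f * x) ^ 2 / (4 * (x * s)) := mul_le_sq_add_div_four_mul hx hs
    _ ≤ (μ' - x * s) ^ 2 / (2 * μ) := by
      rw [hstep]
      exact div_le_div_of_nonneg_left (sq_nonneg _) (by positivity) (by linarith)

theorem sum_sq_step_product_le {ι : Type*} [Fintype ι] (x s h f : ι → ℝ) {μ δ : ℝ}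
    (hx : ∀ i, 0 < x i) (hs : ∀ i, 0 < s i) (hμ : 0 < μ) (hδ : 0 ≤ δ)
    (hδι : δ * √(Fintype.card ι) ≤ 1 / 8)
    (hσ : ∑ i, (x i * s i / μ - 1) ^ 2 ≤ 1 / 4)
    (hstep : ∀ i, h i * s i + f i * x i = (1 - δ) * μ - x i * s i)
    (horth : ∑ i, h i * f i = 0) :
    ∑ i, (h i * f i) ^ 2 ≤ (25 * μ / 64) ^ 2 := by
  have hxs : ∀ i, μ / 2 ≤ x i * s i := by
    intro i
    have hi : (x i * s i / μ - 1) ^ 2 ≤ 1 / 4 :=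
      (single_le_sum (fun j _ ↦ sq_nonneg (x j * s j / μ - 1)) (mem_univ i)).trans hσ
    have : 1 / 2 ≤ x i * s i / μ := by nlinarith
    linarith [(le_div_iff₀ hμ).1 this]
  have hshift : ∑ i, (x i * s i / μ - 1 + δ) ^ 2 ≤ (5 / 8) ^ 2 := by
    refine (sum_add_const_sq_le univ (r := 1 / 2) (by norm_num) hδ (by linarith)).trans ?_
    rw [card_univ]
    gcongr
    linarith
  calc ∑ i, (h i * f i) ^ 2 ≤ (2 * ∑ i, ((1 - δ) * μ - x i * s i) ^ 2 / (2 * μ)) ^ 2 :=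
        sum_sq_le_of_sum_eq_zero univ horth
          (fun i _ ↦ step_product_le (hx i) (hs i) hμ (hxs i) (hstep i))
          (fun _ _ ↦ by positivity)
    _ = (μ * ∑ i, (x i * s i / μ - 1 + δ) ^ 2) ^ 2 := by
        rw [mul_sum, mul_sum]
        congr 1
        refine sum_congr rfl fun i _ ↦ ?_
        field_simp
        ring
    _ ≤ (μ * (5 / 8) ^ 2) ^ 2 := by gcongr
    _ = (25 * μ / 64) ^ 2 := by ring

theorem centrality_contraction {n : ℕ} (x s h f : Fin n → ℝ) (μ : ℝ)
    (hx : ∀ i, 0 < x i) (hs : ∀ i, 0 < s i) (hμ : 0 < μ)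
    (hσ : ∑ i, (x i * s i / μ - 1) ^ 2 ≤ 1 / 4)
    (hstep : ∀ i, h i * s i + f i * x i =
      (1 - 1 / (8 * Real.sqrt n)) * μ - x i * s i)
    (horth : ∑ i, h i * f i = 0) :
    ∑ i, ((x i + h i) * (s i + f i) / ((1 - 1 / (8 * Real.sqrt n)) * μ) - 1) ^ 2
      ≤ 1 / 4 := by
  set δ := 1 / (8 * Real.sqrt n)
  have hδ : δ ≤ 1 / 8 := one_div_eight_sqrt_le n
  have hδn : δ * √(Fintype.card (Fin n)) ≤ 1 / 8 := by
    simpa only [Fintype.card_fin] using one_div_eight_sqrt_mul_sqrt_le n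
  have hδ0 : 0 ≤ δ := by positivity
  clear_value δ
  have hμ' : 0 < (1 - δ) * μ := mul_pos (by linarith) hμ
  have hterm : ∀ i,
      (x i + h i) * (s i + f i) / ((1 - δ) * μ) - 1 = h i * f i / ((1 - δ) * μ) := by
    intro i
    rw [div_sub_one hμ'.ne']
    congr 1
    linear_combination hstep i
  have hcontract : 25 * μ / 64 ≤ (1 - δ) * μ / 2 := by nlinarith
  calc ∑ i, ((x i + h i) * (s i + f i) / ((1 - δ) * μ) - 1) ^ 2
      = (∑ i, (h i * f i) ^ 2) / ((1 - δ) * μ) ^ 2 := by simp only [hterm, div_pow, sum_div]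
    _ ≤ (25 * μ / 64) ^ 2 / ((1 - δ) * μ) ^ 2 := by
        gcongr
        exact sum_sq_step_product_le x s h f hx hs hμ hδ0 hδn hσ hstep horth
    _ ≤ ((1 - δ) * μ / 2) ^ 2 / ((1 - δ) * μ) ^ 2 := by gcongr
    _ = 1 / 4 := by rw [div_pow, div_div_cancel_left' (pow_ne_zero 2 hμ'.ne')]; norm_num
end

section
/- Key intermediate inequality for centrality: with σ, δ ∈ [0,1), μ′ = (1−δ)μ, and σ′ defined as in the Newton update (σ′² = ∑ᵢ(hᵢfᵢ/μ′)² with hᵀf = 0, hᵢsᵢ + fᵢxᵢ = μ′ − xᵢsᵢ, x, s > 0, σ² = ∑ᵢ(xᵢsᵢ/μ − 1)² < 1), one has σ′ ≤ (√n·δ + σ)² / (2(1−σ)(1−δ)). -/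
/-!
Write `μ' = (1 - δ) μ` and `cᵢ = μ' - xᵢ sᵢ = hᵢ sᵢ + fᵢ xᵢ`. By AM–GM,
`hᵢ fᵢ · xᵢ sᵢ = (hᵢ sᵢ)(fᵢ xᵢ) ≤ cᵢ² / 4`, and `xᵢ sᵢ ≥ (1 - σ) μ` because each term of `σ²` is
at most `σ²`; so the positive part of `hᵢ fᵢ` is at most `cᵢ² / (4 (1 - σ) μ)`. Since `hᵀf = 0`,
`∑ |hᵢ fᵢ|` is twice the sum of these positive parts, and it dominates the ℓ² norm `σ' μ'`.
Finally `‖c‖₂ ≤ ‖(μ - xᵢ sᵢ)ᵢ‖₂ + ‖(δ μ)ᵢ‖₂ = (σ + √n δ) μ` by the triangle inequality.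
-/

open Finset

lemma posPart_mul_le_sq_div {h f x s m : ℝ} (hm : 0 < m) (hxs : m ≤ x * s) :
    (h * f)⁺ ≤ (h * s + f * x) ^ 2 / (4 * m) := by
  rcases le_total (h * f) 0 with hneg | hpos
  · rw [posPart_eq_zero.2 hneg]; positivity
  · rw [posPart_eq_self.2 hpos, le_div_iff₀ (by positivity)]
    calc h * f * (4 * m) ≤ 4 * (h * s) * (f * x) := by nlinarith
      _ ≤ _ := four_mul_le_sq_add _ _

section

variable {ι : Type*}

lemma abs_le_of_sq_eq_sum_sq {s : Finset ι} {a : ι → ℝ} {σ : ℝ} (hσ0 : 0 ≤ σ)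
    (hσ : σ ^ 2 = ∑ j ∈ s, a j ^ 2) {i : ι} (hi : i ∈ s) : |a i| ≤ σ :=
  abs_le_of_sq_le_sq (hσ ▸ single_le_sum (fun j _ => sq_nonneg (a j)) hi) hσ0

lemma sum_abs_eq_two_mul_sum_posPart {s : Finset ι} {a : ι → ℝ} (ha : ∑ i ∈ s, a i = 0) :
    ∑ i ∈ s, |a i| = 2 * ∑ i ∈ s, (a i)⁺ := by
  have habs : ∀ i, |a i| = 2 * (a i)⁺ - a i := fun i => by
    rw [← posPart_add_negPart]
    linarith [posPart_sub_negPart (a i)]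
  simp_rw [habs, sum_sub_distrib, ha, ← mul_sum, sub_zero]

lemma sqrt_sum_sq_le_sum_abs (s : Finset ι) (a : ι → ℝ) :
    √(∑ i ∈ s, a i ^ 2) ≤ ∑ i ∈ s, |a i| := by
  rw [Real.sqrt_le_iff]
  refine ⟨sum_nonneg fun i _ => abs_nonneg (a i), ?_⟩
  simpa only [sq_abs] using sum_sq_le_sq_sum_of_nonneg (s := s) fun i _ => abs_nonneg (a i)

variable [Fintype ι]

lemma sqrt_sum_sq_sub_le (a b : ι → ℝ) :
    √(∑ i, (a i - b i) ^ 2) ≤ √(∑ i, a i ^ 2) + √(∑ i, b i ^ 2) := by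
  have hnorm : ∀ v : ι → ℝ, ‖WithLp.toLp 2 v‖ = √(∑ i, v i ^ 2) := by
    intro v; simp [EuclideanSpace.norm_eq]
  simpa [hnorm] using norm_sub_le (WithLp.toLp 2 a) (WithLp.toLp 2 b)

lemma sqrt_sum_sq_sub_const_le (a : ι → ℝ) {c : ℝ} (hc : 0 ≤ c) :
    √(∑ i, (a i - c) ^ 2) ≤ √(∑ i, a i ^ 2) + √(Fintype.card ι) * c := by
  have hconst : √(∑ _i : ι, c ^ 2) = √(Fintype.card ι) * c := by
    rw [sum_const, card_univ, nsmul_eq_mul, Real.sqrt_mul (Nat.cast_nonneg _), Real.sqrt_sq hc]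
  exact hconst ▸ sqrt_sum_sq_sub_le a fun _ => c

lemma sum_abs_mul_le_of_sum_mul_eq_zero {h f x s : ι → ℝ} {m : ℝ}
    (hm : 0 < m) (hxs : ∀ i, m ≤ x i * s i) (horth : ∑ i, h i * f i = 0) :
    ∑ i, |h i * f i| ≤ (∑ i, (h i * s i + f i * x i) ^ 2) / (2 * m) :=
  calc ∑ i, |h i * f i| = 2 * ∑ i, (h i * f i)⁺ := sum_abs_eq_two_mul_sum_posPart horth
    _ ≤ 2 * ∑ i, (h i * s i + f i * x i) ^ 2 / (4 * m) := by
      gcongr with i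
      exact posPart_mul_le_sq_div hm (hxs i)
    _ = _ := by rw [← sum_div]; field_simp; ring

variable {p : ι → ℝ} {μ σ : ℝ}

lemma one_sub_mul_le_of_sq_eq_sum_sq_div_sub_one (hμ : 0 < μ) (hσ0 : 0 ≤ σ)
    (hσ : σ ^ 2 = ∑ j, (p j / μ - 1) ^ 2) (i : ι) : (1 - σ) * μ ≤ p i := by
  have := (abs_le.1 (abs_le_of_sq_eq_sum_sq hσ0 hσ (mem_univ i))).1
  rw [← le_div_iff₀ hμ]
  linarith

lemma sqrt_sum_sq_sub_eq_mul_of_sq_eq_sum_sq_div_sub_one (hμ : 0 < μ) (hσ0 : 0 ≤ σ)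
    (hσ : σ ^ 2 = ∑ j, (p j / μ - 1) ^ 2) : √(∑ i, (μ - p i) ^ 2) = σ * μ := by
  rw [← Real.sqrt_sq (by positivity : 0 ≤ σ * μ), mul_pow, hσ, sum_mul]
  exact congrArg _ (sum_congr rfl fun i _ => by field_simp; ring)

end

theorem centrality_key_inequality_general {n : ℕ} (x s h f : Fin n → ℝ) (μ δ σ σ' : ℝ)
    (hμ : 0 < μ)
    (hδ0 : 0 ≤ δ) (hδ1 : δ < 1)
    (hσ0 : 0 ≤ σ) (hσ : σ ^ 2 = ∑ i, (x i * s i / μ - 1) ^ 2) (hσ1 : σ < 1)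
    (hstep : ∀ i, h i * s i + f i * x i = (1 - δ) * μ - x i * s i)
    (horth : ∑ i, h i * f i = 0)
    (hσ'0 : 0 ≤ σ') (hσ' : σ' ^ 2 = ∑ i, (h i * f i / ((1 - δ) * μ)) ^ 2) :
    σ' ≤ (Real.sqrt n * δ + σ) ^ 2 / (2 * (1 - σ) * (1 - δ)) := by
  have hμ' : 0 < (1 - δ) * μ := mul_pos (by linarith) hμ
  have hm : 0 < (1 - σ) * μ := mul_pos (by linarith) hμ
  have hxs : ∀ i, (1 - σ) * μ ≤ x i * s i :=
    one_sub_mul_le_of_sq_eq_sum_sq_div_sub_one hμ hσ0 hσ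
  have hσ'_le : σ' ≤ (∑ i, |h i * f i|) / ((1 - δ) * μ) :=
    calc σ' = √(∑ i, (h i * f i / ((1 - δ) * μ)) ^ 2) := by rw [← hσ', Real.sqrt_sq hσ'0]
      _ ≤ ∑ i, |h i * f i / ((1 - δ) * μ)| := sqrt_sum_sq_le_sum_abs _ _
      _ = _ := by simp_rw [abs_div, abs_of_pos hμ', sum_div]
  have hc : ∑ i, (h i * s i + f i * x i) ^ 2 ≤ ((σ + √n * δ) * μ) ^ 2 := by
    rw [← Real.sqrt_le_left (by positivity)]
    calc √(∑ i, (h i * s i + f i * x i) ^ 2) = √(∑ i, ((μ - x i * s i) - δ * μ) ^ 2) :=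
          congrArg _ (sum_congr rfl fun i _ => by rw [hstep]; ring)
      _ ≤ σ * μ + √n * (δ * μ) := by
          simpa only [sqrt_sum_sq_sub_eq_mul_of_sq_eq_sum_sq_div_sub_one hμ hσ0 hσ,
            Fintype.card_fin] using
            sqrt_sum_sq_sub_const_le (fun i => μ - x i * s i) (mul_nonneg hδ0 hμ.le)
      _ = _ := by ring
  calc σ' ≤ (((σ + √n * δ) * μ) ^ 2 / (2 * ((1 - σ) * μ))) / ((1 - δ) * μ) := by
        refine hσ'_le.trans (div_le_div_of_nonneg_right ?_ hμ'.le)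
        exact (sum_abs_mul_le_of_sum_mul_eq_zero hm hxs horth).trans
          (div_le_div_of_nonneg_right hc (by positivity))
    _ = _ := by field_simp; ring

theorem centrality_key_inequality {n : ℕ} (x s h f : Fin n → ℝ) (μ δ σ σ' : ℝ)
    (hx : ∀ i, 0 < x i) (hs : ∀ i, 0 < s i) (hμ : 0 < μ)
    (hδ0 : 0 ≤ δ) (hδ1 : δ < 1)
    (hσ0 : 0 ≤ σ) (hσ : σ ^ 2 = ∑ i, (x i * s i / μ - 1) ^ 2) (hσ1 : σ < 1)
    (hstep : ∀ i, h i * s i + f i * x i = (1 - δ) * μ - x i * s i)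
    (horth : ∑ i, h i * f i = 0)
    (hσ'0 : 0 ≤ σ') (hσ' : σ' ^ 2 = ∑ i, (h i * f i / ((1 - δ) * μ)) ^ 2) :
    σ' ≤ (Real.sqrt n * δ + σ) ^ 2 / (2 * (1 - σ) * (1 - δ)) :=
  centrality_key_inequality_general x s h f μ δ σ σ' hμ hδ0 hδ1 hσ0 hσ hσ1 hstep horth hσ'0 hσ'
end
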